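/- Simple random walk on the coordinate axes (Lemma A.1, x-space form): For every dimension d>2 there exists a constant C>0 such that for all n≥1, Σ_{x∈ℤ^d} D^{*n}(x) · 1_⊥(x) ≤ C n^{−(d−1)/2}. (Equivalently, d times this sum is the probability that an n-step simple random walk on ℤ^d ends at a nonzero point of one of the d coordinate axes, up to the factor 1/d in 1_⊥; the paper states this bound as (2π)^{−d}∫_{[−π,π]^d} D̂(k)^n 1̂_⊥(k) dk ≤ O(n^{−(d−1)/2}).) -/

import Mathlib

open scoped BigOperators ENNReal
open scoped Classical

noncomputable section

namespace PrudentWalk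

/-- Lattice points of `ℤ^d`. -/
abbrev Pt (d : ℕ) := Fin d → ℤ

/-- `ℓ¹`-norm on `ℤ^d`. -/
def norm1 {d : ℕ} (x : Pt d) : ℤ := ∑ i, |x i|

/-- Squared Euclidean norm of a lattice point, as a real number. -/
def norm2sq {d : ℕ} (x : Pt d) : ℝ := ∑ i, ((x i : ℝ))^2

/-- `w` is an `n`-step nearest-neighbour walk from `x` to `y`
(encoded as a function `ℕ → ℤ^d` frozen at `y` after time `n`). -/
def IsWalk {d : ℕ} (n : ℕ) (x y : Pt d) (w : ℕ → Pt d) : Prop :=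
  w 0 = x ∧ (∀ s, n ≤ s → w s = y) ∧ ∀ s < n, norm1 (w (s + 1) - w s) = 1

/-- The set `W_n(x,y)` of `n`-step nearest-neighbour walks from `x` to `y`. -/
def Walks (d n : ℕ) (x y : Pt d) := { w : ℕ → Pt d // IsWalk n x y w }

/-- `U_{st}(w) = -1` if `w(s) - w(t) ∈ ℕ₀ ⬝ (w(t) - w(t-1))`, and `0` otherwise. -/
def U {d : ℕ} (w : ℕ → Pt d) (s t : ℕ) : ℝ :=
  if ∃ m : ℕ, w s - w t = (m : ℤ) • (w t - w (t - 1)) then -1 else 0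

/-- `φ^λ(w) = ∏_{0 ≤ s < t ≤ n} (1 + λ U_{st}(w))` for an `n`-step walk `w`. -/
def phi {d : ℕ} (lam : ℝ) (n : ℕ) (w : ℕ → Pt d) : ℝ :=
  ∏ t ∈ Finset.range (n + 1), ∏ s ∈ Finset.range t, (1 + lam * U w s t)

/-- `c_n^λ(x,y)`. -/
def cps (d : ℕ) (lam : ℝ) (n : ℕ) (x y : Pt d) : ℝ :=
  ∑' w : Walks d n x y, phi lam n w.1

/-- `c_n^λ = Σ_x c_n^λ(0,x)`. -/
def cTot (d : ℕ) (lam : ℝ) (n : ℕ) : ℝ := ∑' x : Pt d, cps d lam n 0 x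

/-- The two-point function `G_z^λ(x,y) ∈ [0,∞]`. -/
def G (d : ℕ) (lam z : ℝ) (x y : Pt d) : ℝ≥0∞ :=
  ∑' n : ℕ, ENNReal.ofReal (cps d lam n x y) * ENNReal.ofReal z ^ n

/-- The susceptibility `χ^λ(z) ∈ [0,∞]`. -/
def chi (d : ℕ) (lam z : ℝ) : ℝ≥0∞ := ∑' x : Pt d, G d lam z 0 x

/-- The critical point `z_c(λ)`: the radius of convergence of the susceptibility
(a power series with nonnegative coefficients). -/
def zc (d : ℕ) (lam : ℝ) : ℝ := sSup { z : ℝ | 0 ≤ z ∧ chi d lam z < ⊤ }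

/-- `x ⊥ a` : `x` and `a` differ in at most one coordinate. -/
def Perp {d : ℕ} (x a : Pt d) : Prop := ∃ i : Fin d, ∀ j, j ≠ i → x j = a j

/-- The modified indicator `1_⊥`, with values in `[0,∞]`. -/
def indPerp (d : ℕ) (x : Pt d) : ℝ≥0∞ :=
  if Perp x 0 ∧ x ≠ 0 then ((d : ℝ≥0∞))⁻¹ else 0

/-- The modified indicator `1_⊥`, real-valued. -/
def indPerpReal (d : ℕ) (x : Pt d) : ℝ :=
  if Perp x 0 ∧ x ≠ 0 then (d : ℝ)⁻¹ else 0

/-- The prudent bubble diagram `B_z^λ ∈ [0,∞]`. -/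
def bubble (d : ℕ) (lam z : ℝ) : ℝ≥0∞ :=
  ⨆ y : Pt d, ∑' x₁ : Pt d, ∑' x₂ : Pt d,
    G d lam z 0 x₁ * G d lam z x₁ x₂ * indPerp d (x₂ - y)

/-- `k ⬝ x` for `k ∈ ℝ^d`, `x ∈ ℤ^d`. -/
def dotR {d : ℕ} (k : Fin d → ℝ) (x : Pt d) : ℝ := ∑ i, k i * (x i : ℝ)

/-- The Fourier transform `ĉ_n^λ(k)`. -/
def chat (d : ℕ) (lam : ℝ) (n : ℕ) (k : Fin d → ℝ) : ℂ :=
  ∑' x : Pt d, (cps d lam n 0 x : ℂ) * Complex.exp (Complex.I * (dotR k x : ℂ))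

/-! ### Laces -/

/-- `e` is an edge on the integer interval `[a,b]`. -/
def IsEdgeOn (a b : ℕ) (e : ℕ × ℕ) : Prop := a ≤ e.1 ∧ e.1 < e.2 ∧ e.2 ≤ b

/-- `Γ` is a connected graph on `[a,b]`. -/
def IsConnGraph (a b : ℕ) (Γ : Finset (ℕ × ℕ)) : Prop :=
  (∀ e ∈ Γ, IsEdgeOn a b e) ∧ (∃ e ∈ Γ, e.1 = a) ∧ (∃ e ∈ Γ, e.2 = b) ∧
    ∀ c : ℕ, a < c → c < b → ∃ e ∈ Γ, e.1 < c ∧ c < e.2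

/-- `L` is a lace on `[a,b]`: a minimally connected graph. -/
def IsLace (a b : ℕ) (L : Finset (ℕ × ℕ)) : Prop :=
  IsConnGraph a b L ∧ ∀ e ∈ L, ¬ IsConnGraph a b (L.erase e)

/-- The sequence `t₁, t₂, …` of the lace construction:
`t₁ = max{t : at ∈ Γ}`, `t_{i+1} = max{t : st ∈ Γ, s < t_i}`. -/
def tSeq (a : ℕ) (Γ : Finset (ℕ × ℕ)) : ℕ → ℕ
  | 0 => (Γ.filter fun e => e.1 = a).sup Prod.snd
  | (i + 1) => (Γ.filter fun e => e.1 < tSeq a Γ i).sup Prod.snd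

/-- `s_i = min{s : s t_i ∈ Γ}` of the lace construction. -/
def sOf (Γ : Finset (ℕ × ℕ)) (t : ℕ) : ℕ := sInf { s : ℕ | (s, t) ∈ Γ }

/-- The lace `𝓛_Γ` associated with a connected graph `Γ` on `[a,b]`. -/
def laceOf (a : ℕ) (Γ : Finset (ℕ × ℕ)) : Finset (ℕ × ℕ) :=
  (Finset.range (Γ.card + 1)).image fun i => (sOf Γ (tSeq a Γ i), tSeq a Γ i)

/-- The set `𝒞(L)` of edges on `[a,b]` compatible with the lace `L`. -/
def compat (a b : ℕ) (L : Finset (ℕ × ℕ)) : Finset (ℕ × ℕ) :=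
  (Finset.range (b + 1) ×ˢ Finset.range (b + 1)).filter fun e =>
    IsEdgeOn a b e ∧ e ∉ L ∧ laceOf a (insert e L) = L

/-- The set `𝓛_N[a,b]` of laces on `[a,b]` with exactly `N` edges. -/
def lacesN (a b N : ℕ) : Finset (Finset (ℕ × ℕ)) :=
  ((Finset.range (b + 1) ×ˢ Finset.range (b + 1)).powerset).filter fun L =>
    IsLace a b L ∧ L.card = N

/-- `∏_{st ∈ L} (-λ U_{st}(w)) ∏_{s't' ∈ 𝒞(L)} (1 + λ U_{s't'}(w))` for walks on `[0,n]`. -/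
def laceProd {d : ℕ} (lam : ℝ) (n : ℕ) (L : Finset (ℕ × ℕ)) (w : ℕ → Pt d) : ℝ :=
  (∏ e ∈ L, (-(lam * U w e.1 e.2))) * ∏ e ∈ compat 0 n L, (1 + lam * U w e.1 e.2)

/-- The lace-expansion coefficient `π_n^{(N)}(x)`. -/
def piN (d : ℕ) (lam : ℝ) (N n : ℕ) (x : Pt d) : ℝ :=
  lam ^ N * ∑' w : Walks d n 0 x, ∑ L ∈ lacesN 0 n N,
    (∏ e ∈ L, (-U w.1 e.1 e.2)) * ∏ e ∈ compat 0 n L, (1 + lam * U w.1 e.1 e.2)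

/-- The lace-expansion coefficient `π_n(x) = Σ_{N=1}^n (-1)^N π_n^{(N)}(x)`. -/
def piCoef (d : ℕ) (lam : ℝ) (n : ℕ) (x : Pt d) : ℝ :=
  ∑ N ∈ Finset.Icc 1 n, (-1 : ℝ) ^ N * piN d lam N n x

/-- `Π_z^{(N)}(x) = Σ_{n ≥ 1} z^n Σ_w Σ_L (…) ∈ [0,∞]` (all summands nonnegative). -/
def PiN (d : ℕ) (lam z : ℝ) (N : ℕ) (x : Pt d) : ℝ≥0∞ :=
  ∑' n : ℕ, ENNReal.ofReal (z ^ (n + 1)) *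
    ∑' w : Walks d (n + 1) 0 x, ∑ L ∈ lacesN 0 (n + 1) N,
      ENNReal.ofReal (laceProd lam (n + 1) L w.1)

/-- `Π_z^λ(x) = Σ_{N ≥ 1} (-1)^N Π_z^{(N)}(x)`. -/
def PiR (d : ℕ) (lam z : ℝ) (x : Pt d) : ℝ :=
  ∑' N : ℕ, (-1 : ℝ) ^ (N + 1) * (PiN d lam z (N + 1) x).toReal

/-! ### Analytic objects -/

/-- `Y_{z,k}^λ(x) = (1 - cos (k⬝x)) G_z^λ(x) ∈ [0,∞]`. -/
def Y (d : ℕ) (lam z : ℝ) (k : Fin d → ℝ) (x : Pt d) : ℝ≥0∞ :=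
  ENNReal.ofReal (1 - Real.cos (dotR k x)) * G d lam z 0 x

/-- Convolution of `[0,∞]`-valued functions on `ℤ^d`. -/
def econv {d : ℕ} (f g : Pt d → ℝ≥0∞) (x : Pt d) : ℝ≥0∞ := ∑' y : Pt d, f y * g (x - y)

/-- Sup-norm of a `[0,∞]`-valued function on `ℤ^d`. -/
def esup {d : ℕ} (f : Pt d → ℝ≥0∞) : ℝ≥0∞ := ⨆ x : Pt d, f x

/-- `D̂(k) = (1/d) Σ_i cos k_i`. -/
def Dhat (d : ℕ) (k : Fin d → ℝ) : ℝ := (1 / d) * ∑ i, Real.cos (k i)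

/-- The step distribution `D` of simple random walk. -/
def Dker (d : ℕ) (x : Pt d) : ℝ := if norm1 x = 1 then 1 / (2 * d) else 0

/-- `n`-fold convolution `D^{*n}`. -/
def Dn (d : ℕ) : ℕ → Pt d → ℝ
  | 0 => fun x => if x = 0 then 1 else 0
  | (n + 1) => fun x => ∑' y : Pt d, Dn d n y * Dker d (x - y)

/-- The function `𝒩_{a,b}(x)`, with values in `[0,∞]`. -/
def Nfun (d : ℕ) (a b x : Pt d) : ℝ≥0∞ :=
  if Perp a b ∧ a ≠ b ∧ norm1 (x - a) = 1 ∧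
      (∃ θ : ℝ, 0 ≤ θ ∧ θ ≤ 1 ∧ ∀ i, (x i : ℝ) = (a i : ℝ) + θ * ((b i : ℝ) - (a i : ℝ)))
    then ((d : ℝ≥0∞))⁻¹ else 0

/-- Helper padding a finite tuple of lattice points by `0`. -/
def padFn {d m : ℕ} (f : Fin m → Pt d) (j : ℕ) : Pt d :=
  if h : j < m then f ⟨j, h⟩ else 0

/-- The regularized indicator `1_{⊥,R}`. -/
def indPerpR (d : ℕ) (R : ℝ) (x : Pt d) : ℝ :=
  if Perp x 0 ∧ x ≠ 0 then (d : ℝ)⁻¹ * Real.exp (-(norm2sq x) / R) else 0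

/-- `1*_{⊥,R} = 1_{⊥,R} + δ₀`. -/
def indPerpRstar (d : ℕ) (R : ℝ) (x : Pt d) : ℝ :=
  indPerpR d R x + (if x = 0 then 1 else 0)

/-- `G_z^λ(x)` as a real number (for `z < z_c` the series is finite). -/
def Greal (d : ℕ) (lam z : ℝ) (x : Pt d) : ℝ := (G d lam z 0 x).toReal

/-- `χ^λ(z)` as a real number. -/
def chiR (d : ℕ) (lam z : ℝ) : ℝ := ∑' x : Pt d, Greal d lam z x

/-- `p(z) ∈ [0, 1/(2d))` defined by `1/(1 - 2 d p(z)) = χ^λ(z)`. -/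
def pz (d : ℕ) (lam z : ℝ) : ℝ := (chiR d lam z - 1) / (2 * d * chiR d lam z)

/-- `Ĉ_p(k) = 1 / (1 - 2 d p D̂(k))`. -/
def Chat (d : ℕ) (p : ℝ) (k : Fin d → ℝ) : ℝ := 1 / (1 - 2 * d * p * Dhat d k)

/-- The Fourier transform `Ĝ_z^λ(k)`. -/
def Ghat (d : ℕ) (lam z : ℝ) (k : Fin d → ℝ) : ℂ :=
  ∑' x : Pt d, (Greal d lam z x : ℂ) * Complex.exp (Complex.I * (dotR k x : ℂ))

/-- `U_{p}(k,ℓ)`. -/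
def Ubb (d : ℕ) (p : ℝ) (k l : Fin d → ℝ) : ℝ :=
  (Chat d p k)⁻¹ * (Chat d p (l - k) * Chat d p l + Chat d p (k + l) * Chat d p l
    + Chat d p (l - k) * Chat d p (k + l))

/-- `k ∈ [-π,π]^d`. -/
def inBox (d : ℕ) (k : Fin d → ℝ) : Prop := ∀ i, |k i| ≤ Real.pi

/-- `f₁(z) = 2 d z`. -/
def f1 (d : ℕ) (z : ℝ) : ℝ := 2 * d * z

/-- `f₂(z) = sup_k |Ĝ_z(k)| / Ĉ_{p(z)}(k)`. -/
def f2 (d : ℕ) (lam z : ℝ) : ℝ :=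
  sSup { r : ℝ | ∃ k : Fin d → ℝ, inBox d k ∧
    r = ‖Ghat d lam z k‖ / Chat d (pz d lam z) k }

/-- `f₃(z) = sup_{k,ℓ} |Δ_k Ĝ_z(ℓ)| / (2 U_{p(z)}(k,ℓ))`. -/
def f3 (d : ℕ) (lam z : ℝ) : ℝ :=
  sSup { r : ℝ | ∃ k l : Fin d → ℝ, inBox d k ∧ inBox d l ∧
    r = ‖Ghat d lam z (l + k) + Ghat d lam z (l - k) - 2 * Ghat d lam z l‖
      / (2 * Ubb d (pz d lam z) k l) }

/-- The bootstrap function `f(z) = max{f₁, f₂, f₃}`. -/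
def fB (d : ℕ) (lam z : ℝ) : ℝ := max (f1 d z) (max (f2 d lam z) (f3 d lam z))

/-- The Fourier transform `Π̂_z(k)` of the lace-expansion function. -/
def Pihat (d : ℕ) (lam z : ℝ) (k : Fin d → ℝ) : ℂ :=
  ∑' p : Pt d × ℕ, ((piCoef d lam (p.2 + 1) p.1 * z ^ (p.2 + 1) : ℝ) : ℂ)
    * Complex.exp (Complex.I * (dotR k p.1 : ℂ))

end PrudentWalk

namespace PrudentWalk

/-- the box `[-n,n]^d` -/
def box (d n : ℕ) : Finset (Pt d) := Fintype.piFinset fun _ => Finset.Icc (-(n:ℤ)) n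

lemma mem_box {d n : ℕ} {x : Pt d} : x ∈ box d n ↔ ∀ i, |x i| ≤ n := by
  simp [box, Fintype.mem_piFinset, abs_le]

lemma Dker_nonneg (d : ℕ) (x : Pt d) : 0 ≤ Dker d x := by
  unfold Dker; split <;> positivity

lemma Dker_ne_zero {d : ℕ} {x : Pt d} (h : Dker d x ≠ 0) : norm1 x = 1 := by
  by_contra h'; simp [Dker, h'] at h

lemma abs_le_of_norm1 {d : ℕ} {x : Pt d} (i : Fin d) : |x i| ≤ norm1 x :=
  Finset.single_le_sum (f := fun j => |x j|) (fun j _ => abs_nonneg _) (Finset.mem_univ i)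

lemma Dn_support {d n : ℕ} {x : Pt d} (h : x ∉ box d n) : Dn d n x = 0 := by
  induction n generalizing x with
  | zero =>
    have : x ≠ 0 := by rintro rfl; exact h (mem_box.2 (by simp))
    simp [Dn, this]
  | succ n ih =>
    show ∑' y : Pt d, Dn d n y * Dker d (x - y) = 0
    have key : ∀ y : Pt d, Dn d n y * Dker d (x - y) = 0 := by
      intro y
      rw [mul_eq_zero]
      by_cases hy : y ∈ box d n
      · right
        by_contra hD
        apply h
        rw [mem_box]
        intro i
        have h1 : |x i - y i| ≤ 1 := by
          have := abs_le_of_norm1 (x := x - y) i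
          rw [Dker_ne_zero hD] at this
          simpa using this
        have h2 : |y i| ≤ (n:ℤ) := mem_box.1 hy i
        have : |x i| ≤ |x i - y i| + |y i| := by
          calc |x i| = |(x i - y i) + y i| := by ring_nf
          _ ≤ _ := abs_add_le _ _
        push_cast
        omega
      · left; exact ih hy
    rw [tsum_congr key, tsum_zero]




lemma norm1_single {d : ℕ} (j : Fin d) (c : ℤ) : norm1 (Pi.single j c) = |c| := by
  unfold norm1
  rw [Finset.sum_eq_single j]
  · simp
  · intro i _ hi; simp [Pi.single_apply, hi]
  · simp

lemma norm1_eq_one {d : ℕ} {u : Pt d} (h : norm1 u = 1) :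
    ∃ j : Fin d, ∃ c : ℤ, (c = 1 ∨ c = -1) ∧ u = Pi.single j c := by
  have h0 : ∃ j, u j ≠ 0 := by
    by_contra hc
    push_neg at hc
    rw [show u = 0 from funext hc] at h
    simp [norm1] at h
  obtain ⟨j, hj⟩ := h0
  have h1 : 1 ≤ |u j| := Int.one_le_abs (by omega)
  have hrest : ∀ i, i ≠ j → u i = 0 := by
    intro i hij
    by_contra hne
    have h2 : 1 ≤ |u i| := Int.one_le_abs (by omega)
    have hsub : ({i, j} : Finset (Fin d)) ⊆ Finset.univ := Finset.subset_univ _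
    have := Finset.sum_le_sum_of_subset_of_nonneg hsub
      (fun t _ _ => abs_nonneg (u t))
    rw [Finset.sum_pair hij] at this
    unfold norm1 at h
    omega
  have huj : |u j| = 1 := by
    unfold norm1 at h
    rw [Finset.sum_eq_single j (fun i _ hij => by simp [hrest i hij]) (by simp)] at h
    exact h
  refine ⟨j, u j, ?_, ?_⟩
  · rcases abs_eq (by norm_num : (0:ℤ) ≤ 1) |>.1 huj with h' | h' <;> [left; right] <;> exact h'
  · funext i
    by_cases hij : i = j
    · subst hij; simp
    · simp [Pi.single_apply, hij, hrest i hij]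

def nbrs (d : ℕ) : Finset (Pt d) :=
  Finset.image (fun p : Fin d × Bool => Pi.single p.1 (if p.2 then (1:ℤ) else -1)) Finset.univ

lemma nbr_inj (d : ℕ) : Function.Injective
    (fun p : Fin d × Bool => (Pi.single p.1 (if p.2 then (1:ℤ) else -1) : Pt d)) := by
  rintro ⟨j, b⟩ ⟨j', b'⟩ h
  simp only at h
  have hj : j = j' := by
    by_contra hne
    have := congrFun h j
    simp [Pi.single_apply, hne] at this
    cases b <;> simp_all
  subst hj
  have := congrFun h j
  simp [Pi.single_apply] at this
  cases b <;> cases b' <;> simp_all <;> omega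

lemma mem_nbrs {d : ℕ} {u : Pt d} : u ∈ nbrs d ↔ norm1 u = 1 := by
  constructor
  · intro hu
    simp only [nbrs, Finset.mem_image] at hu
    obtain ⟨⟨j, b⟩, -, rfl⟩ := hu
    rw [norm1_single]; cases b <;> norm_num
  · intro hu
    obtain ⟨j, c, hc, rfl⟩ := norm1_eq_one hu
    simp only [nbrs, Finset.mem_image]
    rcases hc with rfl | rfl
    · exact ⟨(j, true), Finset.mem_univ _, by simp⟩
    · exact ⟨(j, false), Finset.mem_univ _, by simp⟩

lemma sum_nbrs {d : ℕ} {M : Type*} [AddCommMonoid M] (f : Pt d → M) :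
    ∑ u ∈ nbrs d, f u = ∑ j : Fin d, (f (Pi.single j 1) + f (Pi.single j (-1))) := by
  rw [nbrs, Finset.sum_image (fun p _ q _ h => nbr_inj d h)]
  rw [Fintype.sum_prod_type]
  refine Finset.sum_congr rfl fun j _ => ?_
  rw [Fintype.sum_bool]
  simp



lemma Dn_succ {d n : ℕ} (x : Pt d) :
    Dn d (n + 1) x = ∑ y ∈ box d n, Dn d n y * Dker d (x - y) := by
  show ∑' y : Pt d, Dn d n y * Dker d (x - y) = _
  exact tsum_eq_sum (fun y hy => by rw [Dn_support hy, zero_mul])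

lemma Dn_nonneg (d : ℕ) : ∀ n (x : Pt d), 0 ≤ Dn d n x
  | 0, x => by unfold Dn; split <;> norm_num
  | (n+1), x => by
    rw [Dn_succ]
    exact Finset.sum_nonneg fun y _ => mul_nonneg (Dn_nonneg d n y) (Dker_nonneg d _)

lemma Dker_nbr {d : ℕ} (hd : 0 < d) {u : Pt d} (hu : u ∈ nbrs d) :
    Dker d u = 1 / (2 * d) := by
  rw [Dker, if_pos (mem_nbrs.1 hu)]

lemma sum_box_Dker {d n : ℕ} {y : Pt d} (hy : y ∈ box d n) (f : Pt d → ℂ) :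
    ∑ x ∈ box d (n+1), (Dker d (x - y) : ℂ) * f x
      = ((1 / (2 * d) : ℝ) : ℂ) * ∑ j : Fin d,
          (f (y + Pi.single j 1) + f (y + Pi.single j (-1))) := by
  have hsub : (nbrs d).image (y + ·) ⊆ box d (n+1) := by
    intro x hx
    simp only [Finset.mem_image] at hx
    obtain ⟨u, hu, rfl⟩ := hx
    rw [mem_box]
    intro i
    have h1 : |u i| ≤ 1 := by
      have := abs_le_of_norm1 (x := u) i
      rw [mem_nbrs.1 hu] at this
      exact this
    have h2 : |y i| ≤ (n : ℤ) := mem_box.1 hy i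
    have : |y i + u i| ≤ |y i| + |u i| := abs_add_le _ _
    push_cast
    simpa using by omega
  rw [← Finset.sum_subset hsub ?van]
  case van =>
    intro x _ hx
    have h0 : Dker d (x - y) = 0 := by
      by_contra hD
      apply hx
      simp only [Finset.mem_image]
      refine ⟨x - y, mem_nbrs.2 (Dker_ne_zero hD), by ring⟩
    rw [h0]; simp
  rw [Finset.sum_image (fun a _ b _ h => by simpa using h)]
  have : ∀ u ∈ nbrs d, (Dker d (y + u - y) : ℂ) * f (y + u)
      = ((1 / (2 * d) : ℝ) : ℂ) * f (y + u) := by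
    intro u hu
    congr 1
    rw [show y + u - y = u by ring]
    rw [Dker, if_pos (mem_nbrs.1 hu)]
  rw [Finset.sum_congr rfl this, ← Finset.mul_sum]
  congr 1
  exact sum_nbrs _


lemma dotR_add {d : ℕ} (k : Fin d → ℝ) (y u : Pt d) :
    dotR k (y + u) = dotR k y + dotR k u := by
  unfold dotR
  rw [← Finset.sum_add_distrib]
  refine Finset.sum_congr rfl fun i _ => ?_
  push_cast [Pi.add_apply]
  ring

lemma dotR_single {d : ℕ} (k : Fin d → ℝ) (j : Fin d) (c : ℤ) :
    dotR k (Pi.single j c) = k j * c := by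
  unfold dotR
  rw [Finset.sum_eq_single j]
  · simp
  · intro i _ hi; simp [Pi.single_apply, hi]
  · simp

/-- expo short-hand -/
def ee {d : ℕ} (k : Fin d → ℝ) (x : Pt d) : ℂ := Complex.exp (Complex.I * (dotR k x : ℝ))

lemma ee_add {d : ℕ} (k : Fin d → ℝ) (y u : Pt d) : ee k (y + u) = ee k y * ee k u := by
  unfold ee
  rw [← Complex.exp_add, dotR_add]
  push_cast
  ring_nf

lemma ee_single_add {d : ℕ} (k : Fin d → ℝ) (j : Fin d) :
    ee k (Pi.single j 1) + ee k (Pi.single j (-1)) = 2 * (Real.cos (k j) : ℂ) := by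
  unfold ee
  rw [dotR_single, dotR_single]
  push_cast
  rw [mul_comm Complex.I, mul_comm Complex.I, Complex.exp_mul_I, Complex.exp_mul_I]
  rw [show ((k j : ℂ) * -1) = -(k j) by ring, Complex.cos_neg, Complex.sin_neg]
  simp only [mul_one]
  ring

lemma char_fn (d : ℕ) (n : ℕ) (k : Fin d → ℝ) :
    ∑ x ∈ box d n, (Dn d n x : ℂ) * ee k x = ((Dhat d k : ℝ) : ℂ) ^ n := by
  induction n with
  | zero =>
    have hbox : box d 0 = {0} := by
      ext x
      simp only [mem_box, Finset.mem_singleton]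
      constructor
      · intro h
        funext i
        have := h i
        simp only [Nat.cast_zero] at this
        simpa using abs_nonpos_iff.1 this
      · rintro rfl i; simp
    rw [hbox]
    simp [Dn, ee, dotR]
  | succ n ih =>
    have inner : ∀ y ∈ box d n, ∑ x ∈ box d (n+1), (Dker d (x - y) : ℂ) * ee k x
        = ee k y * ((Dhat d k : ℝ) : ℂ) := by
      intro y hy
      rw [sum_box_Dker hy]
      have : ∀ j : Fin d, ee k (y + Pi.single j 1) + ee k (y + Pi.single j (-1))
          = ee k y * (2 * (Real.cos (k j) : ℂ)) := by
        intro j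
        rw [ee_add, ee_add, ← mul_add, ee_single_add]
      rw [Finset.sum_congr rfl fun j _ => this j, ← Finset.mul_sum]
      unfold Dhat
      push_cast
      rw [← Finset.mul_sum]
      ring
    calc ∑ x ∈ box d (n+1), (Dn d (n+1) x : ℂ) * ee k x
        = ∑ x ∈ box d (n+1), ∑ y ∈ box d n,
            (Dn d n y : ℂ) * ((Dker d (x - y) : ℂ) * ee k x) := by
          refine Finset.sum_congr rfl fun x _ => ?_
          rw [Dn_succ]
          push_cast
          rw [Finset.sum_mul]
          exact Finset.sum_congr rfl fun y _ => by ring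
      _ = ∑ y ∈ box d n, ∑ x ∈ box d (n+1),
            (Dn d n y : ℂ) * ((Dker d (x - y) : ℂ) * ee k x) := Finset.sum_comm
      _ = ∑ y ∈ box d n, (Dn d n y : ℂ) * (ee k y * ((Dhat d k : ℝ) : ℂ)) := by
          refine Finset.sum_congr rfl fun y hy => ?_
          rw [← Finset.mul_sum, inner y hy]
      _ = (∑ y ∈ box d n, (Dn d n y : ℂ) * ee k y) * ((Dhat d k : ℝ) : ℂ) := by
          rw [Finset.sum_mul]
          exact Finset.sum_congr rfl fun y _ => by ring
      _ = ((Dhat d k : ℝ) : ℂ) ^ (n+1) := by rw [ih]; ring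

def BoxS (d : ℕ) : Set (Fin d → ℝ) := Set.pi Set.univ fun _ => Set.Icc (-Real.pi) Real.pi

lemma measurableSet_BoxS (d : ℕ) : MeasurableSet (BoxS d) :=
  MeasurableSet.univ_pi fun _ => measurableSet_Icc

lemma isCompact_BoxS (d : ℕ) : IsCompact (BoxS d) :=
  isCompact_univ_pi fun _ => isCompact_Icc

lemma integral_BoxS_prod {d : ℕ} {𝕜 : Type*} [RCLike 𝕜] (g : Fin d → ℝ → 𝕜) :
    ∫ k in BoxS d, ∏ j, g j (k j) = ∏ j, ∫ t in Set.Icc (-Real.pi) Real.pi, g j t := by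
  have h1 : ∀ k : Fin d → ℝ, (BoxS d).indicator (fun k => ∏ j, g j (k j)) k
      = ∏ j, (Set.Icc (-Real.pi) Real.pi).indicator (g j) (k j) := by
    intro k
    by_cases hk : k ∈ BoxS d
    · rw [Set.indicator_of_mem hk]
      exact Finset.prod_congr rfl fun j _ =>
        (Set.indicator_of_mem (hk j (Set.mem_univ j)) _).symm
    · rw [Set.indicator_of_notMem hk]
      have : ∃ j, k j ∉ Set.Icc (-Real.pi) Real.pi := by
        by_contra hc
        push_neg at hc
        exact hk fun j _ => hc j
      obtain ⟨j, hj⟩ := this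
      exact (Finset.prod_eq_zero (Finset.mem_univ j)
        (Set.indicator_of_notMem hj _)).symm
  rw [← MeasureTheory.integral_indicator (measurableSet_BoxS d)]
  simp_rw [h1]
  rw [MeasureTheory.integral_fintype_prod_volume_eq_prod
    (f := fun j t => (Set.Icc (-Real.pi) Real.pi).indicator (g j) t)]
  exact Finset.prod_congr rfl fun j _ =>
    MeasureTheory.integral_indicator measurableSet_Icc

lemma I1 (m : ℤ) :
    ∫ t in Set.Icc (-Real.pi) Real.pi, Complex.exp (Complex.I * ((t * m : ℝ) : ℂ))
      = if m = 0 then ((2 * Real.pi : ℝ) : ℂ) else 0 := by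
  rw [MeasureTheory.integral_Icc_eq_integral_Ioc,
    ← intervalIntegral.integral_of_le (by linarith [Real.pi_pos] : -Real.pi ≤ Real.pi)]
  by_cases hm : m = 0
  · subst hm
    rw [if_pos rfl]
    simp only [Int.cast_zero, mul_zero, Complex.ofReal_zero, Complex.exp_zero]
    rw [intervalIntegral.integral_const]
    rw [Complex.real_smul]
    push_cast
    ring
  · rw [if_neg hm]
    have hc : (Complex.I * m : ℂ) ≠ 0 := by
      simp [Complex.I_ne_zero, Int.cast_ne_zero, hm]
    have hcong : ∀ t ∈ Set.uIcc (-Real.pi) Real.pi,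
        Complex.exp (Complex.I * ((t * m : ℝ) : ℂ)) = Complex.exp ((Complex.I * m) * t) := by
      intro t _
      push_cast
      ring_nf
    rw [intervalIntegral.integral_congr hcong, integral_exp_mul_complex hc]
    have key : ∀ s : ℝ, Complex.exp (Complex.I * m * s) = (-1 : ℂ) ^ (m : ℤ) ∨ True := fun _ => Or.inr trivial
    have e1 : Complex.exp (Complex.I * m * Real.pi) = (-1 : ℂ) ^ m := by
      rw [show (Complex.I * m * Real.pi : ℂ) = m * (Real.pi * Complex.I) by ring,
        Complex.exp_int_mul, Complex.exp_pi_mul_I]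
    have e2 : Complex.exp (Complex.I * m * ((-Real.pi : ℝ) : ℂ)) = (-1 : ℂ) ^ (-m) := by
      rw [show (Complex.I * m * ((-Real.pi : ℝ) : ℂ) : ℂ) = ((-m : ℤ) : ℂ) * (Real.pi * Complex.I) by push_cast; ring]
      rw [Complex.exp_int_mul, Complex.exp_pi_mul_I]
    have e3 : ((-1 : ℂ)) ^ (-m) = (-1 : ℂ) ^ m := by
      rw [zpow_neg]
      refine inv_eq_of_mul_eq_one_left ?_
      rw [← mul_zpow]
      norm_num
    rw [show ((-Real.pi : ℝ) : ℂ) = -(Real.pi : ℂ) by push_cast; ring] at e2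
    rw [e1]
    push_cast
    rw [e2, e3, sub_self, zero_div]

lemma ee_update_prod {d : ℕ} (i : Fin d) (x : Pt d) (k : Fin d → ℝ) :
    ee (Function.update k i 0) x
      = ∏ j : Fin d, (if j = i then 1
          else Complex.exp (Complex.I * ((k j * x j : ℝ) : ℂ))) := by
  unfold ee dotR
  rw [Complex.ofReal_sum, Finset.mul_sum, Complex.exp_sum]
  refine Finset.prod_congr rfl fun j _ => ?_
  rw [Function.update_apply]
  by_cases hj : j = i
  · simp [hj]
  · simp [hj]

lemma cont_ee {d : ℕ} (i : Fin d) (x : Pt d) :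
    Continuous fun k : Fin d → ℝ => ee (Function.update k i 0) x := by
  have : (fun k : Fin d → ℝ => ee (Function.update k i 0) x)
      = fun k => ∏ j : Fin d, (if j = i then 1
          else Complex.exp (Complex.I * ((k j * x j : ℝ) : ℂ))) :=
    funext (ee_update_prod i x)
  rw [this]
  apply continuous_finset_prod
  intro j _
  by_cases hj : j = i
  · simp only [hj, if_pos]
    exact continuous_const
  · simp only [hj, if_neg, if_false]
    exact Complex.continuous_exp.comp (continuous_const.mul
      (Complex.continuous_ofReal.comp ((continuous_apply j).mul continuous_const)))

lemma integral_ee_box {d : ℕ} (i : Fin d) (x : Pt d) :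
    ∫ k in BoxS d, ee (Function.update k i 0) x
      = if (∀ j, j ≠ i → x j = 0) then (((2 * Real.pi) ^ d : ℝ) : ℂ) else 0 := by
  have h1 : ∫ k in BoxS d, ee (Function.update k i 0) x
      = ∏ j : Fin d, ∫ t in Set.Icc (-Real.pi) Real.pi,
          (if j = i then 1 else Complex.exp (Complex.I * ((t * x j : ℝ) : ℂ))) := by
    rw [show (fun k : Fin d → ℝ => ee (Function.update k i 0) x)
        = fun k => ∏ j : Fin d, (fun t => if j = i then (1:ℂ)
            else Complex.exp (Complex.I * ((t * x j : ℝ) : ℂ))) (k j) from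
      funext (ee_update_prod i x)]
    exact integral_BoxS_prod (fun j t => if j = i then (1:ℂ) else Complex.exp (Complex.I * ((t * x j : ℝ) : ℂ)))
  have hconst : ∫ t in Set.Icc (-Real.pi) Real.pi, (1 : ℂ) = ((2 * Real.pi : ℝ) : ℂ) := by
    rw [MeasureTheory.setIntegral_const, MeasureTheory.measureReal_def, Real.volume_Icc]
    rw [ENNReal.toReal_ofReal (by linarith [Real.pi_pos])]
    rw [Complex.real_smul]
    push_cast
    ring
  have h2 : ∀ j : Fin d, (∫ t in Set.Icc (-Real.pi) Real.pi,
      (if j = i then 1 else Complex.exp (Complex.I * ((t * x j : ℝ) : ℂ))))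
      = if j = i then ((2 * Real.pi : ℝ) : ℂ) else
          (if x j = 0 then ((2 * Real.pi : ℝ) : ℂ) else 0) := by
    intro j
    by_cases hj : j = i
    · simp only [hj, if_pos]
      exact hconst
    · simp only [hj, if_neg, if_false]
      exact I1 (x j)
  rw [h1, Finset.prod_congr rfl fun j _ => h2 j]
  by_cases hx : ∀ j, j ≠ i → x j = 0
  · rw [if_pos hx]
    have : ∀ j : Fin d, (if j = i then ((2 * Real.pi : ℝ) : ℂ) else
        (if x j = 0 then ((2 * Real.pi : ℝ) : ℂ) else 0)) = ((2 * Real.pi : ℝ) : ℂ) := by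
      intro j
      by_cases hj : j = i
      · simp [hj]
      · simp [hj, hx j hj]
    rw [Finset.prod_congr rfl fun j _ => this j, Finset.prod_const]
    push_cast
    simp
  · rw [if_neg hx]
    push_neg at hx
    obtain ⟨j, hji, hxj⟩ := hx
    exact Finset.prod_eq_zero (Finset.mem_univ j) (by simp [hji, hxj])

lemma inversion {d : ℕ} (n : ℕ) (i : Fin d) :
    ((2 * Real.pi) ^ d : ℝ) * (∑ x ∈ box d n, if (∀ j, j ≠ i → x j = 0) then Dn d n x else 0)
      = ∫ k in BoxS d, (Dhat d (Function.update k i 0)) ^ n := by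
  have hint : ∀ x ∈ box d n, MeasureTheory.IntegrableOn
      (fun k : Fin d → ℝ => (Dn d n x : ℂ) * ee (Function.update k i 0) x) (BoxS d) := by
    intro x _
    exact ((continuous_const.mul (cont_ee i x)).continuousOn).integrableOn_compact
      (isCompact_BoxS d)
  have key : ∫ k in BoxS d, (((Dhat d (Function.update k i 0)) ^ n : ℝ) : ℂ)
      = (((2 * Real.pi) ^ d * (∑ x ∈ box d n,
          if (∀ j, j ≠ i → x j = 0) then Dn d n x else 0) : ℝ) : ℂ) := by
    have hpt : ∀ k : Fin d → ℝ, (((Dhat d (Function.update k i 0)) ^ n : ℝ) : ℂ)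
        = ∑ x ∈ box d n, (Dn d n x : ℂ) * ee (Function.update k i 0) x := by
      intro k
      rw [char_fn]
      push_cast
      ring
    rw [MeasureTheory.integral_congr_ae (Filter.Eventually.of_forall hpt)]
    rw [MeasureTheory.integral_finset_sum _ hint]
    have : ∀ x ∈ box d n, (∫ k in BoxS d, (Dn d n x : ℂ) * ee (Function.update k i 0) x)
        = (Dn d n x : ℂ) * (if (∀ j, j ≠ i → x j = 0)
            then (((2 * Real.pi) ^ d : ℝ) : ℂ) else 0) := by
      intro x _
      rw [MeasureTheory.integral_const_mul, integral_ee_box]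
    rw [Finset.sum_congr rfl this]
    push_cast [apply_ite (Complex.ofReal)]
    rw [Finset.mul_sum]
    refine Finset.sum_congr rfl fun x _ => ?_
    by_cases hx : ∀ j, j ≠ i → x j = 0
    · rw [if_pos hx, if_pos hx]
      push_cast
      ring
    · rw [if_neg hx, if_neg hx]
      simp
  have h3 := integral_ofReal (𝕜 := ℂ)
    (μ := MeasureTheory.volume.restrict (BoxS d))
    (f := fun k => Dhat d (Function.update k i 0) ^ n)
  exact (Complex.ofReal_injective ((h3.symm).trans key)).symm

lemma update_abs_le_pi {d : ℕ} (i : Fin d) {k : Fin d → ℝ} (hk : k ∈ BoxS d) (j : Fin d) :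
    |Function.update k i 0 j| ≤ Real.pi := by
  rw [Function.update_apply]
  by_cases hj : j = i
  · simp [hj, Real.pi_pos.le]
  · rw [if_neg hj]
    have := hk j (Set.mem_univ j)
    rw [Set.mem_Icc] at this
    rw [abs_le]
    exact this

lemma Dhat_pt_bound {d : ℕ} (hd : 2 < d) (n : ℕ) (i : Fin d) {k : Fin d → ℝ}
    (hk : k ∈ BoxS d) :
    Dhat d (Function.update k i 0) ^ n
      ≤ (((d : ℝ) - 2) / d) ^ n
        + ∏ j : Fin d, (if j = i then 1
            else Real.exp (-(2 / (d * Real.pi ^ 2) * n) * (k j) ^ 2)) := by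
  have hd0 : (0 : ℝ) < d := by positivity
  have hpi := Real.pi_pos
  set kk := Function.update k i 0 with hkk
  set c : ℝ := 2 / (d * Real.pi ^ 2) with hc
  have hc0 : 0 < c := by positivity
  set S : ℝ := ∑ j : Fin d, (kk j) ^ 2 with hS
  have hS0 : 0 ≤ S := Finset.sum_nonneg fun j _ => sq_nonneg _
  -- upper bound
  have up : Dhat d kk ≤ Real.exp (-(c * S)) := by
    have s1 : ∑ j : Fin d, Real.cos (kk j) ≤ ∑ j : Fin d, (1 - 2 / Real.pi ^ 2 * (kk j) ^ 2) :=
      Finset.sum_le_sum fun j _ => Real.cos_le_one_sub_mul_cos_sq (update_abs_le_pi i hk j)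
    have hdne : (d:ℝ) ≠ 0 := hd0.ne'
    have s2 : (1 / (d:ℝ)) * ∑ j : Fin d, (1 - 2 / Real.pi ^ 2 * (kk j) ^ 2) = 1 - c * S := by
      rw [Finset.sum_sub_distrib, Finset.sum_const, Finset.card_univ, Fintype.card_fin,
        ← Finset.mul_sum, ← hS, nsmul_eq_mul, mul_one, mul_sub, one_div_mul_cancel hdne, hc]
      ring
    have : Dhat d kk ≤ 1 - c * S := by
      unfold Dhat
      rw [← s2]
      have h1d : 0 ≤ 1 / (d:ℝ) := by positivity
      exact mul_le_mul_of_nonneg_left s1 h1d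
    calc Dhat d kk ≤ 1 - c * S := this
      _ ≤ Real.exp (-(c * S)) := by
          have := Real.add_one_le_exp (-(c * S))
          linarith
  -- lower bound
  have low : -(((d : ℝ) - 2) / d) ≤ Dhat d kk := by
    have s1 : ∑ j : Fin d, (if j = i then (1:ℝ) else -1) ≤ ∑ j : Fin d, Real.cos (kk j) := by
      refine Finset.sum_le_sum fun j _ => ?_
      by_cases hj : j = i
      · subst hj
        simp [hkk, Real.cos_zero]
      · rw [if_neg hj]
        exact Real.neg_one_le_cos _
    have s2 : ∑ j : Fin d, (if j = i then (1:ℝ) else -1) = 2 - d := by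
      have : ∀ j : Fin d, (if j = i then (1:ℝ) else -1) = (-1) + (if j = i then 2 else 0) := by
        intro j
        by_cases hj : j = i
        · simp [hj]; norm_num
        · simp [hj]
      rw [Finset.sum_congr rfl fun j _ => this j, Finset.sum_add_distrib,
        Finset.sum_const, Finset.card_univ, Fintype.card_fin,
        Finset.sum_ite_eq' Finset.univ i (fun _ => (2:ℝ)), if_pos (Finset.mem_univ i)]
      simp
      ring
    unfold Dhat
    have h2 : (2 - (d:ℝ)) ≤ ∑ j : Fin d, Real.cos (kk j) := by rw [← s2]; exact s1
    have hdne : (d:ℝ) ≠ 0 := hd0.ne'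
    have hneg : -(((d:ℝ) - 2) / d) = (1/d) * (2 - d) := by
      field_simp
      ring
    rw [hneg]
    exact mul_le_mul_of_nonneg_left h2 (by positivity)
  -- combine
  have habs : |Dhat d kk| ≤ max (((d:ℝ) - 2) / d) (Real.exp (-(c * S))) := by
    rw [abs_le]
    constructor
    · have : -(max (((d:ℝ) - 2) / d) (Real.exp (-(c * S)))) ≤ -(((d:ℝ) - 2) / d) :=
        neg_le_neg (le_max_left _ _)
      linarith
    · exact up.trans (le_max_right _ _)
  have hd2 : (2:ℝ) ≤ d := by exact_mod_cast hd.le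
  have hrn : (0:ℝ) ≤ (((d:ℝ) - 2) / d) ^ n :=
    pow_nonneg (div_nonneg (by linarith) hd0.le) n
  have hprod : Real.exp (-(c * S)) ^ n
      = ∏ j : Fin d, (if j = i then 1
          else Real.exp (-(2 / (d * Real.pi ^ 2) * n) * (k j) ^ 2)) := by
    rw [← Real.exp_nat_mul]
    rw [show (n : ℝ) * (-(c * S)) = ∑ j : Fin d, (-(c * n) * (kk j)^2) by
      rw [← Finset.mul_sum, ← hS]; ring]
    rw [Real.exp_sum]
    refine Finset.prod_congr rfl fun j _ => ?_
    by_cases hj : j = i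
    · subst hj
      simp [hkk]
    · rw [if_neg hj]
      congr 1
      rw [hkk, Function.update_apply, if_neg hj, hc]
  calc Dhat d kk ^ n ≤ |Dhat d kk ^ n| := le_abs_self _
    _ = |Dhat d kk| ^ n := abs_pow _ _
    _ ≤ (max (((d:ℝ) - 2) / d) (Real.exp (-(c * S)))) ^ n :=
        pow_le_pow_left₀ (abs_nonneg _) habs n
    _ ≤ (((d:ℝ) - 2) / d) ^ n + Real.exp (-(c * S)) ^ n := by
        rcases max_cases (((d:ℝ) - 2) / d) (Real.exp (-(c * S))) with ⟨hm, _⟩ | ⟨hm, _⟩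
        · rw [hm]
          have : (0:ℝ) ≤ Real.exp (-(c * S)) ^ n := by positivity
          linarith
        · rw [hm]
          linarith
    _ = (((d:ℝ) - 2) / d) ^ n + ∏ j : Fin d, (if j = i then 1
          else Real.exp (-(2 / (d * Real.pi ^ 2) * n) * (k j) ^ 2)) := by rw [hprod]

lemma cont_update_comp {d : ℕ} (i j : Fin d) :
    Continuous fun k : Fin d → ℝ => Function.update k i 0 j := by
  have : (fun k : Fin d → ℝ => Function.update k i 0 j)
      = fun k => if j = i then 0 else k j := funext fun k => Function.update_apply k i 0 j
  rw [this]
  by_cases hj : j = i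
  · simp [hj]; exact continuous_const
  · simp [hj]; exact continuous_apply j

lemma integral_Dhat_bound {d : ℕ} (hd : 2 < d) {n : ℕ} (hn : 1 ≤ n) (i : Fin d) :
    ∫ k in BoxS d, Dhat d (Function.update k i 0) ^ n
      ≤ (2 * Real.pi) ^ d * (((d:ℝ) - 2) / d) ^ n
        + 2 * Real.pi * (Real.sqrt (Real.pi / (2 / (d * Real.pi ^ 2) * n))) ^ (d - 1) := by
  have hd0 : (0:ℝ) < d := by positivity
  have hpi := Real.pi_pos
  set a : ℝ := 2 / (d * Real.pi ^ 2) * n with ha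
  have ha0 : 0 < a := by
    have : (0:ℝ) < n := by exact_mod_cast hn
    positivity
  set r : ℝ := ((d:ℝ) - 2) / d with hr
  have hd2 : (2:ℝ) ≤ d := by exact_mod_cast hd.le
  have hr0 : 0 ≤ r := div_nonneg (by linarith) hd0.le
  set G : (Fin d → ℝ) → ℝ := fun k => r ^ n
      + ∏ j : Fin d, (if j = i then 1 else Real.exp (-a * (k j) ^ 2)) with hG
  have contf : Continuous fun k : Fin d → ℝ => Dhat d (Function.update k i 0) ^ n := by
    apply Continuous.pow
    unfold Dhat
    exact continuous_const.mul (continuous_finset_sum _ fun j _ =>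
      Real.continuous_cos.comp (cont_update_comp i j))
  have contG : Continuous G := by
    apply continuous_const.add
    apply continuous_finset_prod
    intro j _
    by_cases hj : j = i
    · simp only [hj, if_pos]; exact continuous_const
    · simp only [hj, if_neg, if_false]
      exact Real.continuous_exp.comp (continuous_const.mul ((continuous_apply j).pow 2))
  have step1 : ∫ k in BoxS d, Dhat d (Function.update k i 0) ^ n ≤ ∫ k in BoxS d, G k := by
    refine MeasureTheory.setIntegral_mono_on
      (contf.continuousOn.integrableOn_compact (isCompact_BoxS d))
      (contG.continuousOn.integrableOn_compact (isCompact_BoxS d))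
      (measurableSet_BoxS d) ?_
    intro k hk
    exact Dhat_pt_bound hd n i hk
  have hvol : MeasureTheory.volume (BoxS d) = (ENNReal.ofReal (2 * Real.pi)) ^ d := by
    rw [BoxS, MeasureTheory.volume_pi_pi]
    simp only [Real.volume_Icc]
    rw [Finset.prod_const, Finset.card_univ, Fintype.card_fin]
    congr 1
    ring_nf
  have step2 : ∫ k in BoxS d, G k
      = (2 * Real.pi) ^ d * r ^ n
        + ∫ k in BoxS d, ∏ j : Fin d, (if j = i then 1 else Real.exp (-a * (k j) ^ 2)) := by
    rw [hG]
    rw [MeasureTheory.integral_add]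
    · congr 1
      rw [MeasureTheory.setIntegral_const, MeasureTheory.measureReal_def, hvol, smul_eq_mul]
      rw [ENNReal.toReal_pow, ENNReal.toReal_ofReal (by positivity)]
    · exact MeasureTheory.integrableOn_const (isCompact_BoxS d).measure_lt_top.ne
    · exact ((continuous_finset_prod _ fun j _ => by
        by_cases hj : j = i
        · simp only [hj, if_pos]; exact continuous_const
        · simp only [hj, if_neg, if_false]
          exact Real.continuous_exp.comp
            (continuous_const.mul ((continuous_apply j).pow 2))).continuousOn).integrableOn_compact
        (isCompact_BoxS d)
  have step3 : ∫ k in BoxS d, ∏ j : Fin d, (if j = i then 1 else Real.exp (-a * (k j) ^ 2))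
      ≤ 2 * Real.pi * (Real.sqrt (Real.pi / a)) ^ (d - 1) := by
    rw [show (fun k : Fin d → ℝ => ∏ j : Fin d, (if j = i then (1:ℝ)
          else Real.exp (-a * (k j) ^ 2)))
        = fun k => ∏ j : Fin d, (fun t => if j = i then (1:ℝ)
            else Real.exp (-a * t ^ 2)) (k j) from rfl]
    rw [integral_BoxS_prod (fun j t => if j = i then (1:ℝ) else Real.exp (-a * t ^ 2))]
    rw [← Finset.mul_prod_erase Finset.univ _ (Finset.mem_univ i)]
    have hconst : (∫ t in Set.Icc (-Real.pi) Real.pi,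
        (if i = i then (1:ℝ) else Real.exp (-a * t ^ 2))) = 2 * Real.pi := by
      simp only [eq_self_iff_true, if_true]
      rw [MeasureTheory.setIntegral_const, MeasureTheory.measureReal_def, Real.volume_Icc, smul_eq_mul,
        ENNReal.toReal_ofReal (by linarith)]
      ring
    rw [hconst]
    refine mul_le_mul_of_nonneg_left ?_ (by positivity)
    have hval : ∀ j ∈ Finset.univ.erase i,
        (∫ t in Set.Icc (-Real.pi) Real.pi, (if j = i then (1:ℝ) else Real.exp (-a * t ^ 2)))
          ≤ Real.sqrt (Real.pi / a) := by
      intro j hj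
      have hne : j ≠ i := Finset.ne_of_mem_erase hj
      simp only [hne, if_false]
      calc (∫ t in Set.Icc (-Real.pi) Real.pi, Real.exp (-a * t ^ 2))
          ≤ ∫ t : ℝ, Real.exp (-a * t ^ 2) :=
            MeasureTheory.setIntegral_le_integral (integrable_exp_neg_mul_sq ha0)
              (Filter.Eventually.of_forall fun t => (Real.exp_pos _).le)
        _ = Real.sqrt (Real.pi / a) := integral_gaussian a
    calc ∏ j ∈ Finset.univ.erase i, (∫ t in Set.Icc (-Real.pi) Real.pi,
          (if j = i then (1:ℝ) else Real.exp (-a * t ^ 2)))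
        ≤ ∏ _j ∈ Finset.univ.erase i, Real.sqrt (Real.pi / a) := by
          refine Finset.prod_le_prod (fun j _ => ?_) hval
          refine MeasureTheory.setIntegral_nonneg measurableSet_Icc fun t _ => ?_
          by_cases hji : j = i
          · simp [hji]
          · simp only [hji, if_false]
            exact (Real.exp_pos _).le
      _ = (Real.sqrt (Real.pi / a)) ^ (d - 1) := by
          rw [Finset.prod_const, Finset.card_erase_of_mem (Finset.mem_univ i),
            Finset.card_univ, Fintype.card_fin]
  linarith [step1, step2, step3]



lemma geom_poly_bound {r : ℝ} (h0 : 0 ≤ r) (h1 : r < 1) (s : ℕ) :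
    ∃ C : ℝ, 0 < C ∧ ∀ n : ℕ, 1 ≤ n → r ^ n ≤ C * ((n : ℝ) ^ s)⁻¹ := by
  have hsum : Summable fun n : ℕ => (n : ℝ) ^ s * r ^ n :=
    summable_pow_mul_geometric_of_norm_lt_one s
      (by rwa [Real.norm_eq_abs, abs_of_nonneg h0])
  have ht := hsum.tendsto_atTop_zero
  obtain ⟨C, hC⟩ := ht.bddAbove_range
  refine ⟨max C 1, lt_of_lt_of_le one_pos (le_max_right _ _), ?_⟩
  intro n hn
  have hn0 : (0:ℝ) < (n:ℝ) ^ s := by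
    have : (0:ℝ) < n := by exact_mod_cast hn
    positivity
  have h2 : (n:ℝ) ^ s * r ^ n ≤ max C 1 :=
    le_trans (hC (Set.mem_range_self n)) (le_max_left _ _)
  calc r ^ n = ((n:ℝ) ^ s * r ^ n) * ((n:ℝ) ^ s)⁻¹ := by
        field_simp
    _ ≤ (max C 1) * ((n:ℝ) ^ s)⁻¹ :=
        mul_le_mul_of_nonneg_right h2 (inv_nonneg.2 hn0.le)

lemma inv_sqrt_pow {n : ℕ} (m : ℕ) :
    ((Real.sqrt n)⁻¹ : ℝ) ^ m = (n : ℝ) ^ (-((m : ℝ)) / 2) := by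
  have h0 : (0:ℝ) ≤ (n:ℝ) := Nat.cast_nonneg n
  rw [show (-((m:ℝ)) / 2) = (-(1/2 : ℝ)) * m by ring, Real.rpow_mul h0, Real.rpow_natCast]
  congr 1
  rw [Real.rpow_neg h0, Real.sqrt_eq_rpow]


/-- **Lemma A.1** (simple random walk on the coordinate axes): for every `d > 2`
there is `C > 0` such that for all `n ≥ 1`,
`Σ_x D^{*n}(x) 1_⊥(x) ≤ C n^{-(d-1)/2}`. -/
theorem srw_on_axes_bound (d : ℕ) (hd : 2 < d) :
    ∃ C : ℝ, 0 < C ∧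
      ∀ n : ℕ, 1 ≤ n →
        (∑' x : Pt d, Dn d n x * indPerpReal d x) ≤
          C * (n : ℝ) ^ (-(((d : ℝ) - 1) / 2)) := by
  have hd0 : (0:ℝ) < d := by positivity
  have hd2 : (2:ℝ) ≤ d := by exact_mod_cast hd.le
  have hpi := Real.pi_pos
  set r : ℝ := ((d:ℝ) - 2) / d with hr
  have hr0 : 0 ≤ r := div_nonneg (by linarith) hd0.le
  have hr1 : r < 1 := by
    rw [hr, div_lt_one hd0]
    linarith
  obtain ⟨C₁, hC₁0, hC₁⟩ := geom_poly_bound hr0 hr1 d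
  set c0 : ℝ := 2 / (d * Real.pi ^ 2) with hc0
  have hc00 : 0 < c0 := by positivity
  set C₂ : ℝ := 2 * Real.pi * (Real.sqrt (Real.pi / c0)) ^ (d - 1) * ((2 * Real.pi) ^ d)⁻¹
    with hC₂
  have hC₂0 : 0 < C₂ := by positivity
  refine ⟨C₁ + C₂, by positivity, ?_⟩
  intro n hn
  have hn0 : (0:ℝ) < n := by exact_mod_cast hn
  have hn1 : (1:ℝ) ≤ n := by exact_mod_cast hn
  have hts : (∑' x : Pt d, Dn d n x * indPerpReal d x)
      = ∑ x ∈ box d n, Dn d n x * indPerpReal d x :=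
    tsum_eq_sum (fun x hx => by rw [Dn_support hx, zero_mul])
  -- pointwise bound
  have hpt : ∀ x : Pt d, Dn d n x * indPerpReal d x
      ≤ (d:ℝ)⁻¹ * ∑ i : Fin d, (if ∀ j, j ≠ i → x j = 0 then Dn d n x else 0) := by
    intro x
    have hnn : (0:ℝ) ≤ ∑ i : Fin d, (if ∀ j, j ≠ i → x j = 0 then Dn d n x else 0) :=
      Finset.sum_nonneg fun i _ => by
        split
        · exact Dn_nonneg d n x
        · exact le_refl 0
    unfold indPerpReal
    by_cases h : Perp x 0 ∧ x ≠ 0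
    · rw [if_pos h]
      obtain ⟨i0, hi0⟩ := h.1
      have hcond : ∀ j, j ≠ i0 → x j = 0 := fun j hj => by simpa using hi0 j hj
      have hsingle : Dn d n x
          ≤ ∑ i : Fin d, (if ∀ j, j ≠ i → x j = 0 then Dn d n x else 0) := by
        have := Finset.single_le_sum (f := fun i : Fin d =>
            (if ∀ j, j ≠ i → x j = 0 then Dn d n x else 0))
          (fun i _ => by
            show (0:ℝ) ≤ if ∀ j, j ≠ i → x j = 0 then Dn d n x else 0
            split
            exacts [Dn_nonneg d n x, le_refl 0]) (Finset.mem_univ i0)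
        rwa [if_pos hcond] at this
      calc Dn d n x * (d:ℝ)⁻¹ = (d:ℝ)⁻¹ * Dn d n x := by ring
        _ ≤ (d:ℝ)⁻¹ * ∑ i : Fin d, (if ∀ j, j ≠ i → x j = 0 then Dn d n x else 0) :=
            mul_le_mul_of_nonneg_left hsingle (by positivity)
    · rw [if_neg h, mul_zero]
      exact mul_nonneg (by positivity) hnn
  -- per-axis bound
  have hP : ∀ i : Fin d, ∑ x ∈ box d n, (if ∀ j, j ≠ i → x j = 0 then Dn d n x else 0)
      ≤ r ^ n + 2 * Real.pi * (Real.sqrt (Real.pi / (c0 * n))) ^ (d - 1)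
          * ((2 * Real.pi) ^ d)⁻¹ := by
    intro i
    have hbd := integral_Dhat_bound hd hn i
    rw [← hc0] at hbd
    rw [← inversion n i] at hbd
    have hpos : (0:ℝ) < (2 * Real.pi) ^ d := by positivity
    calc ∑ x ∈ box d n, (if ∀ j, j ≠ i → x j = 0 then Dn d n x else 0)
        = ((2 * Real.pi) ^ d)⁻¹ * ((2 * Real.pi) ^ d
            * ∑ x ∈ box d n, (if ∀ j, j ≠ i → x j = 0 then Dn d n x else 0)) := by
          field_simp
      _ ≤ ((2 * Real.pi) ^ d)⁻¹ * ((2 * Real.pi) ^ d * r ^ n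
            + 2 * Real.pi * (Real.sqrt (Real.pi / (c0 * n))) ^ (d - 1)) :=
          mul_le_mul_of_nonneg_left hbd (inv_nonneg.2 hpos.le)
      _ = r ^ n + 2 * Real.pi * (Real.sqrt (Real.pi / (c0 * n))) ^ (d - 1)
            * ((2 * Real.pi) ^ d)⁻¹ := by
          field_simp
  set X : ℝ := (n : ℝ) ^ (-(((d : ℝ) - 1) / 2)) with hX
  have hX0 : 0 ≤ X := Real.rpow_nonneg hn0.le _
  -- identify the second term
  have hcast : ((d - 1 : ℕ) : ℝ) = (d:ℝ) - 1 := by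
    have h1d : 1 ≤ d := by omega
    push_cast [Nat.cast_sub h1d]
    ring
  have hsq : Real.sqrt (Real.pi / (c0 * n)) = Real.sqrt (Real.pi / c0) * (Real.sqrt n)⁻¹ := by
    rw [show Real.pi / (c0 * n) = (Real.pi / c0) * ((n:ℝ))⁻¹ by
      rw [← div_div, div_eq_mul_inv]]
    rw [Real.sqrt_mul (by positivity) _, Real.sqrt_inv]
  have hterm2 : 2 * Real.pi * (Real.sqrt (Real.pi / (c0 * n))) ^ (d - 1)
      * ((2 * Real.pi) ^ d)⁻¹ = C₂ * X := by
    rw [hsq, mul_pow, inv_sqrt_pow (d - 1), hcast, hC₂, hX]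
    rw [show -(((d:ℝ) - 1)) / 2 = -(((d:ℝ) - 1) / 2) by ring]
    ring
  have hterm1 : r ^ n ≤ C₁ * X := by
    have h1 := hC₁ n hn
    have h2 : ((n:ℝ) ^ d)⁻¹ = (n:ℝ) ^ (-(d:ℝ)) := by
      rw [← Real.rpow_natCast (n:ℝ) d, ← Real.rpow_neg hn0.le]
    have h3 : (n:ℝ) ^ (-(d:ℝ)) ≤ X :=
      Real.rpow_le_rpow_of_exponent_le hn1 (by linarith)
    calc r ^ n ≤ C₁ * ((n:ℝ) ^ d)⁻¹ := h1
      _ = C₁ * (n:ℝ) ^ (-(d:ℝ)) := by rw [h2]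
      _ ≤ C₁ * X := mul_le_mul_of_nonneg_left h3 hC₁0.le
  -- main chain
  rw [hts]
  calc ∑ x ∈ box d n, Dn d n x * indPerpReal d x
      ≤ ∑ x ∈ box d n, (d:ℝ)⁻¹
          * ∑ i : Fin d, (if ∀ j, j ≠ i → x j = 0 then Dn d n x else 0) :=
        Finset.sum_le_sum fun x _ => hpt x
    _ = (d:ℝ)⁻¹ * ∑ i : Fin d, ∑ x ∈ box d n,
          (if ∀ j, j ≠ i → x j = 0 then Dn d n x else 0) := by
        rw [← Finset.mul_sum, Finset.sum_comm]
    _ ≤ (d:ℝ)⁻¹ * ∑ _i : Fin d, (r ^ n + 2 * Real.pi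
          * (Real.sqrt (Real.pi / (c0 * n))) ^ (d - 1) * ((2 * Real.pi) ^ d)⁻¹) := by
        refine mul_le_mul_of_nonneg_left (Finset.sum_le_sum fun i _ => hP i) (by positivity)
    _ = r ^ n + 2 * Real.pi * (Real.sqrt (Real.pi / (c0 * n))) ^ (d - 1)
          * ((2 * Real.pi) ^ d)⁻¹ := by
        rw [Finset.sum_const, Finset.card_univ, Fintype.card_fin, nsmul_eq_mul]
        field_simp
    _ ≤ C₁ * X + C₂ * X := by
        rw [hterm2]
        exact add_le_add_left hterm1 _
    _ = (C₁ + C₂) * X := by ring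


end PrudentWalk
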